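/- With ω as in the KNV construction and 0 < γ < δ/2, δ small enough, for all ξ ≥ δ: ∫₀^ξ ω(η)/η dη ≤ ω(ξ)(2 + log(ξ/δ)) and ∫_ξ^∞ ω(η)/η² dη ≤ 2ω(ξ)/ξ. -/

import Mathlib

open MeasureTheory Set Real

/-- The Kiselev–Nazarov–Volberg modulus of continuity. -/
noncomputable def knv (δ γ : ℝ) (ξ : ℝ) : ℝ :=
  if ξ ≤ δ then ξ - ξ ^ ((3:ℝ)/2)
  else (δ - δ ^ ((3:ℝ)/2)) + ∫ η in Ioc δ ξ, γ / (η * (4 + Real.log (η / δ)))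

/-!
On `(0, δ]` one has `ω(η)/η = 1 - √η ≤ 1`, so that piece of the first integral is at most
`δ ≤ 2 ω(δ) ≤ 2 ω(ξ)` once `δ ≤ 1/4`; on `(δ, ξ]` monotonicity gives `ω(η)/η ≤ ω(ξ)/η`, which
integrates to `ω(ξ) log(ξ/δ)`. Beyond `ξ`, the bound `ω' ≤ γ/(4η)` gives
`ω(η) ≤ ω(ξ) + (γ/4) log(η/ξ)`, and `(A + B log(η/ξ))/η²` has the explicit primitive
`-(A + B + B log(η/ξ))/η`, so the second integral is at most `(ω(ξ) + γ/4)/ξ ≤ 2 ω(ξ)/ξ`.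
-/

open Filter Topology

section Integrals

variable {f g : ℝ → ℝ} {a b c : ℝ}

lemma setIntegral_Ioc_add_Ioc (hab : a ≤ b) (hbc : b ≤ c) (hf₁ : IntegrableOn f (Ioc a b))
    (hf₂ : IntegrableOn f (Ioc b c)) :
    (∫ x in Ioc a b, f x) + ∫ x in Ioc b c, f x = ∫ x in Ioc a c, f x := by
  rw [← Ioc_union_Ioc_eq_Ioc hab hbc,
    setIntegral_union (Ioc_disjoint_Ioc_of_le le_rfl) measurableSet_Ioc hf₁ hf₂]

lemma integrableOn_Ioc_inv (ha : 0 < a) : IntegrableOn (fun x : ℝ => x⁻¹) (Ioc a b) :=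
  ((continuousOn_inv₀.mono fun _ hx => (ha.trans_le hx.1).ne').integrableOn_Icc).mono_set
    Ioc_subset_Icc_self

lemma setIntegral_Ioc_le_mul_log (ha : 0 < a) (hab : a ≤ b) (hf : IntegrableOn f (Ioc a b))
    (hle : ∀ x ∈ Ioc a b, f x ≤ c * x⁻¹) :
    ∫ x in Ioc a b, f x ≤ c * log (b / a) :=
  calc ∫ x in Ioc a b, f x ≤ ∫ x in Ioc a b, c * x⁻¹ :=
        setIntegral_mono_on hf ((integrableOn_Ioc_inv ha).const_mul c) measurableSet_Ioc hle
    _ = c * log (b / a) := by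
        rw [integral_const_mul, ← intervalIntegral.integral_of_le hab,
          integral_inv_of_pos ha (ha.trans_le hab)]

lemma MonotoneOn.integrableOn_Ioc_div (ha : 0 < a) (hg : MonotoneOn g (Icc a b)) :
    IntegrableOn (fun x => g x / x) (Ioc a b) := by
  simp only [div_eq_mul_inv]
  exact ((hg.integrableOn_isCompact isCompact_Icc).mul_continuousOn
    (continuousOn_inv₀.mono fun _ hx => (ha.trans_le hx.1).ne') isCompact_Icc).mono_set
    Ioc_subset_Icc_self

lemma MonotoneOn.setIntegral_Ioc_div_le (ha : 0 < a) (hab : a ≤ b)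
    (hg : MonotoneOn g (Icc a b)) :
    ∫ x in Ioc a b, g x / x ≤ g b * log (b / a) := by
  refine setIntegral_Ioc_le_mul_log ha hab (hg.integrableOn_Ioc_div ha) fun x hx => ?_
  rw [div_eq_mul_inv]
  exact mul_le_mul_of_nonneg_right (hg ⟨hx.1.le, hx.2⟩ ⟨hab, le_rfl⟩ hx.2)
    (inv_nonneg.2 (ha.trans hx.1).le)

end Integrals

section LogGrowth

variable {g : ℝ → ℝ} {ξ A B : ℝ}

lemma hasDerivAt_neg_add_mul_log_div (hξ : 0 < ξ) {x : ℝ} (hx : 0 < x) :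
    HasDerivAt (fun x => -(A + B + B * log (x / ξ)) / x) ((A + B * log (x / ξ)) / x ^ 2) x := by
  have hlog : HasDerivAt (fun x => log (x / ξ)) (1 / ξ / (x / ξ)) x :=
    ((hasDerivAt_id x).div_const ξ).log (div_pos hx hξ).ne'
  refine ((hlog.const_mul B).const_add (A + B)).fun_neg.fun_div (hasDerivAt_id' x) hx.ne'
    |>.congr_deriv ?_
  field_simp
  ring

lemma tendsto_neg_add_mul_log_div_atTop (hξ : 0 < ξ) :
    Tendsto (fun x => -(A + B + B * log (x / ξ)) / x) atTop (𝓝 0) := by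
  have hlog : Tendsto (fun x => log (x / ξ) / (x / ξ)) atTop (𝓝 0) :=
    isLittleO_log_id_atTop.tendsto_div_nhds_zero.comp (tendsto_id.atTop_div_const hξ)
  have hlin : Tendsto (fun x => (A + B) / x) atTop (𝓝 0) :=
    tendsto_const_nhds.div_atTop tendsto_id
  have := (hlin.add (hlog.const_mul (B / ξ))).neg
  rw [mul_zero, add_zero, neg_zero] at this
  refine this.congr' ?_
  filter_upwards [eventually_gt_atTop 0] with x hx
  field_simp

lemma add_mul_log_div_div_sq_nonneg (hξ : 0 < ξ) (hA : 0 ≤ A) (hB : 0 ≤ B) {x : ℝ} (hx : ξ ≤ x) :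
    0 ≤ (A + B * log (x / ξ)) / x ^ 2 := by
  have := log_nonneg ((one_le_div hξ).2 hx)
  positivity

lemma integrableOn_Ioi_add_mul_log_div_sq (hξ : 0 < ξ) (hA : 0 ≤ A) (hB : 0 ≤ B) :
    IntegrableOn (fun x => (A + B * log (x / ξ)) / x ^ 2) (Ioi ξ) :=
  integrableOn_Ioi_deriv_of_nonneg'
    (fun _ hx => hasDerivAt_neg_add_mul_log_div hξ (hξ.trans_le hx))
    (fun _ hx => add_mul_log_div_div_sq_nonneg hξ hA hB hx.le)
    (tendsto_neg_add_mul_log_div_atTop hξ)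

lemma integral_Ioi_add_mul_log_div_sq (hξ : 0 < ξ) (hA : 0 ≤ A) (hB : 0 ≤ B) :
    ∫ x in Ioi ξ, (A + B * log (x / ξ)) / x ^ 2 = (A + B) / ξ := by
  rw [integral_Ioi_of_hasDerivAt_of_nonneg'
    (fun _ hx => hasDerivAt_neg_add_mul_log_div hξ (hξ.trans_le hx))
    (fun _ hx => add_mul_log_div_div_sq_nonneg hξ hA hB hx.le)
    (tendsto_neg_add_mul_log_div_atTop hξ)]
  simp only [div_self hξ.ne', log_one, mul_zero, add_zero]
  ring

lemma MonotoneOn.setIntegral_Ioi_div_sq_le (hξ : 0 < ξ) (hB : 0 ≤ B) (hg : MonotoneOn g (Ici ξ))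
    (hgξ : 0 ≤ g ξ) (hle : ∀ x ∈ Ioi ξ, g x ≤ g ξ + B * log (x / ξ)) :
    ∫ x in Ioi ξ, g x / x ^ 2 ≤ (g ξ + B) / ξ := by
  have hbound := integrableOn_Ioi_add_mul_log_div_sq hξ hgξ hB
  have hpos : ∀ x ∈ Ioi ξ, 0 ≤ g x / x ^ 2 := fun x hx =>
    div_nonneg (hgξ.trans (hg self_mem_Ici (Ioi_subset_Ici_self hx) (le_of_lt hx))) (sq_nonneg x)
  have hdom : ∀ x ∈ Ioi ξ, g x / x ^ 2 ≤ (g ξ + B * log (x / ξ)) / x ^ 2 := fun x hx =>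
    div_le_div_of_nonneg_right (hle x hx) (sq_nonneg x)
  have hmeas : AEStronglyMeasurable (fun x => g x / x ^ 2) (volume.restrict (Ioi ξ)) :=
    ((aemeasurable_restrict_of_monotoneOn measurableSet_Ioi (hg.mono Ioi_subset_Ici_self)).div
      (measurable_id.pow_const 2).aemeasurable).aestronglyMeasurable
  have hint : IntegrableOn (fun x => g x / x ^ 2) (Ioi ξ) := by
    refine hbound.mono' hmeas ((ae_restrict_iff' measurableSet_Ioi).2 (ae_of_all _ fun x hx => ?_))
    rw [norm_of_nonneg (hpos x hx)]
    exact hdom x hx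
  calc ∫ x in Ioi ξ, g x / x ^ 2 ≤ ∫ x in Ioi ξ, (g ξ + B * log (x / ξ)) / x ^ 2 :=
        setIntegral_mono_on hint hbound measurableSet_Ioi hdom
    _ = (g ξ + B) / ξ := integral_Ioi_add_mul_log_div_sq hξ hgξ hB

end LogGrowth

section KNV

variable {δ γ : ℝ}

noncomputable def knvDeriv (δ γ η : ℝ) : ℝ := γ / (η * (4 + log (η / δ)))

lemma knvDeriv_nonneg (hδ : 0 < δ) (hγ : 0 ≤ γ) {η : ℝ} (hη : δ ≤ η) :
    0 ≤ knvDeriv δ γ η := by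
  have := log_nonneg ((one_le_div hδ).2 hη)
  have := hδ.trans_le hη
  unfold knvDeriv
  positivity

lemma knvDeriv_le (hδ : 0 < δ) (hγ : 0 ≤ γ) {η : ℝ} (hη : δ ≤ η) :
    knvDeriv δ γ η ≤ γ / 4 * η⁻¹ := by
  have hlog := log_nonneg ((one_le_div hδ).2 hη)
  have hη₀ := hδ.trans_le hη
  calc knvDeriv δ γ η ≤ γ / (η * 4) :=
        div_le_div_of_nonneg_left hγ (by positivity) (by nlinarith)
    _ = γ / 4 * η⁻¹ := by ring

lemma continuousOn_knvDeriv (hδ : 0 < δ) : ContinuousOn (knvDeriv δ γ) (Ici δ) := by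
  have hlog : ContinuousOn (fun η => log (η / δ)) (Ici δ) :=
    (continuousOn_id.div_const δ).log fun η hη => (div_pos (hδ.trans_le hη) hδ).ne'
  refine continuousOn_const.div (continuousOn_id.mul (continuousOn_const.add hlog)) fun η hη => ?_
  have := log_nonneg ((one_le_div hδ).2 hη)
  exact (mul_pos (hδ.trans_le hη) (by positivity)).ne'

lemma integrableOn_knvDeriv (hδ : 0 < δ) {a b : ℝ} (ha : δ ≤ a) :
    IntegrableOn (knvDeriv δ γ) (Ioc a b) :=
  ((continuousOn_knvDeriv hδ).mono fun _ hη => ha.trans hη.1).integrableOn_Icc.mono_set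
    Ioc_subset_Icc_self

lemma knv_of_le {η : ℝ} (hη : η ≤ δ) : knv δ γ η = η - η ^ ((3 : ℝ) / 2) := if_pos hη

lemma knv_eq_knv_add_integral {ξ : ℝ} (hξ : δ ≤ ξ) :
    knv δ γ ξ = knv δ γ δ + ∫ η in Ioc δ ξ, knvDeriv δ γ η := by
  rcases hξ.eq_or_lt with rfl | hξ
  · simp
  · rw [knv_of_le le_rfl]
    exact if_neg hξ.not_ge

lemma knv_add_integral (hδ : 0 < δ) {a b : ℝ} (ha : δ ≤ a) (hab : a ≤ b) :
    knv δ γ a + ∫ η in Ioc a b, knvDeriv δ γ η = knv δ γ b := by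
  rw [knv_eq_knv_add_integral ha, knv_eq_knv_add_integral (ha.trans hab), add_assoc,
    setIntegral_Ioc_add_Ioc ha hab (integrableOn_knvDeriv hδ le_rfl) (integrableOn_knvDeriv hδ ha)]

lemma knv_monotoneOn (hδ : 0 < δ) (hγ : 0 ≤ γ) : MonotoneOn (knv δ γ) (Ici δ) := by
  intro a ha b _ hab
  rw [← knv_add_integral hδ ha hab]
  exact le_add_of_nonneg_right <| setIntegral_nonneg measurableSet_Ioc fun η hη =>
    knvDeriv_nonneg hδ hγ (le_trans ha hη.1.le)

lemma knv_le_knv_add_mul_log (hδ : 0 < δ) (hγ : 0 ≤ γ) {a b : ℝ} (ha : δ ≤ a) (hab : a ≤ b) :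
    knv δ γ b ≤ knv δ γ a + γ / 4 * log (b / a) := by
  rw [← knv_add_integral hδ ha hab]
  exact (add_le_add_iff_left _).2 <| setIntegral_Ioc_le_mul_log (hδ.trans_le ha) hab
    (integrableOn_knvDeriv hδ ha) fun η hη => knvDeriv_le hδ hγ (le_trans ha hη.1.le)

lemma half_le_knv_self (hδ : 0 < δ) (hδ₄ : δ ≤ 1 / 4) : δ / 2 ≤ knv δ γ δ := by
  have hsqrt : δ ^ ((1 : ℝ) / 2) ≤ 1 / 2 := by
    calc δ ^ ((1 : ℝ) / 2) ≤ (1 / 4) ^ ((1 : ℝ) / 2) := rpow_le_rpow hδ.le hδ₄ (by norm_num)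
      _ = 1 / 2 := by
        rw [show (1 / 4 : ℝ) = (1 / 2) ^ (2 : ℝ) by norm_num, ← rpow_mul (by norm_num)]
        norm_num
  rw [knv_of_le le_rfl, show (3 : ℝ) / 2 = 1 + 1 / 2 by norm_num, rpow_add hδ, rpow_one]
  nlinarith

lemma knv_div_self_of_le {η : ℝ} (hη₀ : 0 < η) (hη : η ≤ δ) :
    knv δ γ η / η = 1 - η ^ ((1 : ℝ) / 2) := by
  rw [knv_of_le hη, show (3 : ℝ) / 2 = 1 + 1 / 2 by norm_num, rpow_add hη₀, rpow_one]
  field_simp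

lemma integrableOn_Ioc_zero_knv_div : IntegrableOn (fun η => knv δ γ η / η) (Ioc 0 δ) :=
  ((continuous_const.sub (continuous_rpow_const (by norm_num))).integrableOn_Icc.mono_set
    Ioc_subset_Icc_self).congr_fun (fun _ hη => (knv_div_self_of_le hη.1 hη.2).symm)
    measurableSet_Ioc

lemma setIntegral_Ioc_zero_knv_div_le_self (hδ : 0 ≤ δ) : ∫ η in Ioc 0 δ, knv δ γ η / η ≤ δ :=
  calc ∫ η in Ioc 0 δ, knv δ γ η / η ≤ ∫ _ in Ioc 0 δ, (1 : ℝ) := by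
        refine setIntegral_mono_on integrableOn_Ioc_zero_knv_div
          (integrableOn_const measure_Ioc_lt_top.ne) measurableSet_Ioc fun η hη => ?_
        rw [knv_div_self_of_le hη.1 hη.2]
        linarith [rpow_nonneg hη.1.le ((1 : ℝ) / 2)]
    _ = δ := by simp [hδ]

lemma setIntegral_Ioc_zero_knv_div_le (hδ : 0 < δ) (hδ₄ : δ ≤ 1 / 4) (hγ : 0 ≤ γ) {ξ : ℝ}
    (hξ : δ ≤ ξ) :
    ∫ η in Ioc 0 ξ, knv δ γ η / η ≤ knv δ γ ξ * (2 + log (ξ / δ)) := by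
  have hmono : MonotoneOn (knv δ γ) (Icc δ ξ) := (knv_monotoneOn hδ hγ).mono Icc_subset_Ici_self
  rw [← setIntegral_Ioc_add_Ioc hδ.le hξ integrableOn_Ioc_zero_knv_div
    (hmono.integrableOn_Ioc_div hδ)]
  have := setIntegral_Ioc_zero_knv_div_le_self (γ := γ) hδ.le
  have := hmono.setIntegral_Ioc_div_le hδ hξ
  have := half_le_knv_self (γ := γ) hδ hδ₄
  have := knv_monotoneOn hδ hγ self_mem_Ici hξ hξ
  linarith

lemma setIntegral_Ioi_knv_div_sq_le (hδ : 0 < δ) (hδ₄ : δ ≤ 1 / 4) (hγ : 0 ≤ γ)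
    (hγδ : γ < δ / 2) {ξ : ℝ} (hξ : δ ≤ ξ) :
    ∫ η in Ioi ξ, knv δ γ η / η ^ 2 ≤ 2 * knv δ γ ξ / ξ := by
  have hknv : δ / 2 ≤ knv δ γ ξ :=
    (half_le_knv_self hδ hδ₄).trans (knv_monotoneOn hδ hγ self_mem_Ici hξ hξ)
  calc ∫ η in Ioi ξ, knv δ γ η / η ^ 2 ≤ (knv δ γ ξ + γ / 4) / ξ :=
        ((knv_monotoneOn hδ hγ).mono (Ici_subset_Ici.2 hξ)).setIntegral_Ioi_div_sq_le
          (hδ.trans_le hξ) (by positivity) (by linarith) fun η hη =>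
            knv_le_knv_add_mul_log hδ hγ hξ (le_of_lt hη)
    _ ≤ 2 * knv δ γ ξ / ξ := div_le_div_of_nonneg_right (by linarith) (hδ.trans_le hξ).le

end KNV

theorem knv_large_xi_integral_bounds :
    ∃ δ₀ > 0, ∀ δ γ : ℝ, 0 < δ → δ < δ₀ → 0 < γ → γ < δ / 2 →
      ∀ ξ : ℝ, δ ≤ ξ →
        (∫ η in Ioc 0 ξ, knv δ γ η / η) ≤ knv δ γ ξ * (2 + Real.log (ξ / δ)) ∧
        (∫ η in Ioi ξ, knv δ γ η / η ^ 2) ≤ 2 * knv δ γ ξ / ξ :=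
  ⟨1 / 4, by norm_num, fun _ _ hδ hδ₄ hγ hγδ _ hξ =>
    ⟨setIntegral_Ioc_zero_knv_div_le hδ hδ₄.le hγ.le hξ,
      setIntegral_Ioi_knv_div_sq_le hδ hδ₄.le hγ.le hγδ hξ⟩⟩
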